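/- arXiv:2103.14777 — 2 statements merged into one kernel-verified Lean document; each statement's English description precedes it below -/
import Mathlib

section
/- For any σ > 1 there exists a constant c(σ) > 1 depending only on σ such that for all real numbers x, y with c(σ) ≤ y ≤ x, one has ln^σ(x+y) - ln^σ(x) - (1/2)·ln^σ(y) ≤ 0, where ln^σ(t) denotes (ln t)^σ. -/
/-!
Write `u = ln (x + y)` and `L = ln y`. Convexity of `t ↦ t ^ σ` bounds the left-hand side by
`σ (u - ln x) u ^ (σ - 1) ≤ 2σ · (y / (x + y)) · u ^ (σ - 1) = 2σ e ^ L · u ^ (σ - 1) e ^ (-u)`.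
Since `t ↦ t ^ (σ - 1) e ^ (-t)` decreases for `t ≥ σ - 1` and `u ≥ L`, this is at most
`2σ L ^ (σ - 1)`, which is `≤ L ^ σ / 2` as soon as `L ≥ 4σ`; so `c = e ^ (4σ)` works.
-/

open Real

theorem rpow_sub_rpow_le_mul_rpow_sub_one {p a b : ℝ} (hp : 1 ≤ p) (hb : 0 ≤ b) (hba : b ≤ a) :
    a ^ p - b ^ p ≤ p * (a - b) * a ^ (p - 1) := by
  rcases hba.eq_or_lt with rfl | hba
  · simp
  have ha : 0 < a := hb.trans_lt hba
  have hbern : 1 + p * (b / a - 1) ≤ (b / a) ^ p := by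
    simpa using one_add_mul_self_le_rpow_one_add (s := b / a - 1)
      (by linarith [div_nonneg hb ha.le]) hp
  rw [div_rpow hb ha.le, le_div_iff₀ (rpow_pos_of_pos ha p)] at hbern
  rw [rpow_sub_one ha.ne']
  have hrewrite : p * (b / a - 1) * a ^ p = -(p * (a - b) * (a ^ p / a)) := by
    field_simp; ring
  linarith

theorem rpow_mul_exp_neg_le_of_le {p u v : ℝ} (hp : 0 ≤ p) (hpu : p ≤ u) (huv : u ≤ v) :
    v ^ p * exp (-v) ≤ u ^ p * exp (-u) := by
  rcases (hp.trans hpu).eq_or_lt with rfl | hu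
  · obtain rfl : p = 0 := le_antisymm hpu hp
    simpa using huv
  have hv : 0 < v := hu.trans_le huv
  have hratio : (v / u) ^ p ≤ exp (v - u) := by
    rw [rpow_def_of_pos (div_pos hv hu)]
    gcongr
    calc log (v / u) * p ≤ (v / u - 1) * p := by
          gcongr; exact log_le_sub_one_of_pos (div_pos hv hu)
      _ = (v - u) * (p / u) := by field_simp
      _ ≤ (v - u) * 1 := by
          gcongr
          exact (div_le_one hu).2 hpu
      _ = v - u := mul_one _
  calc v ^ p * exp (-v) = u ^ p * (v / u) ^ p * exp (-v) := by
        rw [← mul_rpow hu.le (div_pos hv hu).le, mul_div_cancel₀ _ hu.ne']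
    _ ≤ u ^ p * exp (v - u) * exp (-v) := by gcongr
    _ = u ^ p * exp (-u) := by rw [mul_assoc, ← exp_add]; ring_nf

theorem log_add_sub_log_le {x y : ℝ} (hy : 0 < y) (hyx : y ≤ x) :
    log (x + y) - log x ≤ 2 * (y / (x + y)) := by
  have hx : 0 < x := hy.trans_le hyx
  calc log (x + y) - log x = log ((x + y) / x) := (log_div (by positivity) hx.ne').symm
    _ ≤ (x + y) / x - 1 := log_le_sub_one_of_pos (by positivity)
    _ = y / x := by field_simp; ring
    _ ≤ 2 * (y / (x + y)) := by
        rw [mul_div_assoc', div_le_div_iff₀ hx (by positivity)]; nlinarith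

theorem stmt0 (σ : ℝ) (hσ : 1 < σ) :
    ∃ c : ℝ, 1 < c ∧ ∀ x y : ℝ, c ≤ y → y ≤ x →
      Real.log (x + y) ^ σ - Real.log x ^ σ - (1/2) * Real.log y ^ σ ≤ 0 := by
  refine ⟨exp (4 * σ), one_lt_exp_iff.2 (by linarith), fun x y hy hyx => ?_⟩
  have hy0 : 0 < y := (exp_pos _).trans_le hy
  have hx0 : 0 < x := hy0.trans_le hyx
  have hL : 4 * σ ≤ log y := (le_log_iff_exp_le hy0).2 hy
  have hlogx : 0 ≤ log x := by linarith [log_le_log hy0 hyx]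
  have hLu : log y ≤ log (x + y) := log_le_log hy0 (by linarith)
  have hxu : log x ≤ log (x + y) := log_le_log hx0 (by linarith)
  have hdecay : y / (x + y) * log (x + y) ^ (σ - 1) ≤ log y ^ (σ - 1) := by
    have hmono := rpow_mul_exp_neg_le_of_le (p := σ - 1) (by linarith) (by linarith) hLu
    rw [exp_neg, exp_neg, exp_log (by positivity), exp_log hy0, ← div_eq_mul_inv,
      ← div_eq_mul_inv, div_le_div_iff₀ (by positivity) hy0] at hmono
    rw [div_mul_eq_mul_div, div_le_iff₀ (by positivity)]
    linarith
  have hsplit : log y ^ σ = log y * log y ^ (σ - 1) := by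
    rw [← rpow_one_add' (by linarith) (by linarith)]; ring_nf
  suffices log (x + y) ^ σ - log x ^ σ ≤ 1 / 2 * log y ^ σ by linarith
  calc log (x + y) ^ σ - log x ^ σ
      ≤ σ * (log (x + y) - log x) * log (x + y) ^ (σ - 1) :=
        rpow_sub_rpow_le_mul_rpow_sub_one hσ.le hlogx hxu
    _ ≤ σ * (2 * (y / (x + y))) * log (x + y) ^ (σ - 1) := by
        have := rpow_nonneg (hlogx.trans hxu) (σ - 1)
        gcongr
        exact log_add_sub_log_le hy0 hyx
    _ = 2 * σ * (y / (x + y) * log (x + y) ^ (σ - 1)) := by ring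
    _ ≤ 2 * σ * log y ^ (σ - 1) := by gcongr
    _ ≤ 1 / 2 * log y ^ σ := by
        rw [hsplit]
        nlinarith [rpow_nonneg (by linarith : (0:ℝ) ≤ log y) (σ - 1)]
end

section
/- For σ > 1 and δ ∈ (0,1), one has Σ_{n ≥ 3} exp(-δ (ln n)^σ) ≤ (3/δ) · exp((2/(δσ))^{1/(σ-1)}). -/
/-!
Write `n + 3 = exp L`. Young's inequality gives `L ≤ C + (δ/2) L^σ` with
`C = (2/(δσ))^(1/(σ-1))`, so each term is at most `exp C * g L / (n + 3)` where
`g y = exp (-(δ/2) y^σ)`. Since `g` is decreasing and `1/(n+3) ≤ log (n+3) - log (n+2)`, these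
terms sum to at most `∫₀^∞ g = (δ/2)^(-1/σ) Γ(1 + 1/σ)`, and `Γ ≤ 1` on `[1, 2]` by convexity,
so the integral is at most `2/δ`.
-/

open Real Set MeasureTheory

theorem Real.Gamma_le_one_of_mem_Icc {x : ℝ} (hx : x ∈ Icc 1 2) : Gamma x ≤ 1 := by
  have := convexOn_Gamma.le_on_segment (x := 1) (y := 2) (by norm_num) (by norm_num)
    (by rwa [segment_eq_Icc (by norm_num)])
  simpa [Gamma_one, Gamma_two] using this

theorem integral_exp_neg_mul_rpow_le {p b : ℝ} (hp : 1 ≤ p) (hb : 0 < b) :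
    ∫ x in Ioi 0, exp (-b * x ^ p) ≤ b ^ (-1 / p) := by
  have hp0 : 0 < p := zero_lt_one.trans_le hp
  rw [integral_exp_neg_mul_rpow hp0 hb]
  refine mul_le_of_le_one_right (rpow_nonneg hb.le _) (Gamma_le_one_of_mem_Icc ⟨?_, ?_⟩)
  · have : 0 ≤ 1 / p := by positivity
    linarith
  · have : 1 / p ≤ 1 := (div_le_one hp0).2 hp
    linarith

theorem le_inv_rpow_add_mul_rpow {c σ y : ℝ} (hc : 0 < c) (hσ : 1 < σ) (hy : 0 ≤ y) :
    y ≤ (c * σ)⁻¹ ^ (1 / (σ - 1)) + c * y ^ σ := by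
  have hσ0 : 0 < σ := zero_lt_one.trans hσ
  have hcσ : 0 < c * σ := mul_pos hc hσ0
  set t := (c * σ) ^ (1 / σ)
  have ht : 0 < t := rpow_pos_of_pos hcσ _
  have htσ : t ^ σ = c * σ := by rw [← rpow_mul hcσ.le, one_div_mul_cancel hσ0.ne', rpow_one]
  have hconj : σ.HolderConjugate (σ / (σ - 1)) := (holderConjugate_iff_eq_conjExponent hσ).2 rfl
  have hq : 1 ≤ σ / (σ - 1) := by rw [le_div_iff₀ (by linarith)]; linarith
  have hinv : t⁻¹ ^ (σ / (σ - 1)) = (c * σ)⁻¹ ^ (1 / (σ - 1)) := by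
    rw [inv_rpow ht.le, inv_rpow hcσ.le, ← rpow_mul hcσ.le]
    congr 2
    field_simp
  calc y = (y * t) * t⁻¹ := by field_simp
    _ ≤ (y * t) ^ σ / σ + t⁻¹ ^ (σ / (σ - 1)) / (σ / (σ - 1)) :=
        young_inequality_of_nonneg (by positivity) (by positivity) hconj
    _ ≤ c * y ^ σ + (c * σ)⁻¹ ^ (1 / (σ - 1)) := by
        rw [mul_rpow hy ht.le, htσ, hinv]
        gcongr
        · field_simp; rfl
        · exact div_le_self (by positivity) hq
    _ = _ := add_comm _ _

theorem AntitoneOn.sub_mul_le_intervalIntegral {g : ℝ → ℝ} {a b : ℝ} (hg : AntitoneOn g (Icc a b))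
    (hab : a ≤ b) : (b - a) * g b ≤ ∫ x in a..b, g x := by
  have hb : b ∈ Icc a b := right_mem_Icc.2 hab
  calc (b - a) * g b = ∫ _ in a..b, g b := by simp
    _ ≤ ∫ x in a..b, g x := intervalIntegral.integral_mono_on hab intervalIntegrable_const
        ((uIcc_of_le hab ▸ hg).intervalIntegrable) fun x hx => hg hx hb hx.2

theorem AntitoneOn.div_le_intervalIntegral_log {g : ℝ → ℝ} (hg : AntitoneOn g (Ici 0))
    (hg0 : ∀ y, 0 ≤ y → 0 ≤ g y) {x : ℝ} (hx : 1 ≤ x) :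
    g (log (x + 1)) / (x + 1) ≤ ∫ y in log x..log (x + 1), g y := by
  have hx0 : 0 < x := zero_lt_one.trans_le hx
  have hgap : (x + 1)⁻¹ ≤ log (x + 1) - log x := by
    have := one_sub_inv_le_log_of_pos (x := (x + 1) / x) (by positivity)
    rw [log_div (by positivity) hx0.ne', inv_div] at this
    convert this using 1
    field_simp
    ring
  have hlog : 0 ≤ log x := log_nonneg hx
  calc g (log (x + 1)) / (x + 1) = (x + 1)⁻¹ * g (log (x + 1)) := div_eq_inv_mul _ _
    _ ≤ (log (x + 1) - log x) * g (log (x + 1)) :=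
        mul_le_mul_of_nonneg_right hgap (hg0 _ (log_nonneg (by linarith)))
    _ ≤ ∫ y in log x..log (x + 1), g y :=
        (hg.mono fun y hy => hlog.trans hy.1).sub_mul_le_intervalIntegral
          (log_le_log hx0 (by linarith))

theorem AntitoneOn.sum_div_le_integral_log {g : ℝ → ℝ} (hg : AntitoneOn g (Ici 0))
    (hg0 : ∀ y, 0 ≤ y → 0 ≤ g y) (hgi : IntegrableOn g (Ioi 0)) (N : ℕ) :
    ∑ n ∈ Finset.range N, g (log ((n : ℝ) + 3)) / ((n : ℝ) + 3) ≤ ∫ y in Ioi 0, g y := by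
  have hlog (n : ℕ) : 0 ≤ log ((n : ℝ) + 2) := log_nonneg (by linarith [n.cast_nonneg (α := ℝ)])
  have hgN : log 2 ≤ log ((N : ℝ) + 2) := log_le_log two_pos (by linarith [N.cast_nonneg (α := ℝ)])
  calc ∑ n ∈ Finset.range N, g (log ((n : ℝ) + 3)) / ((n : ℝ) + 3)
      ≤ ∑ n ∈ Finset.range N, ∫ y in log ((n : ℝ) + 2)..log (((n + 1 : ℕ) : ℝ) + 2), g y :=
        Finset.sum_le_sum fun n _ => by
          have h := hg.div_le_intervalIntegral_log hg0 (x := n + 2)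
            (by linarith [n.cast_nonneg (α := ℝ)])
          rw [show (n : ℝ) + 2 + 1 = n + 3 by ring] at h
          rwa [show ((n + 1 : ℕ) : ℝ) + 2 = n + 3 by push_cast; ring]
    _ = ∫ y in log 2..log ((N : ℝ) + 2), g y := by
        rw [intervalIntegral.sum_integral_adjacent_intervals fun n _ =>
          (hg.mono fun y hy => (le_min (hlog n) (hlog (n + 1))).trans hy.1).intervalIntegrable]
        simp
    _ = ∫ y in Ioc (log 2) (log ((N : ℝ) + 2)), g y := intervalIntegral.integral_of_le hgN
    _ ≤ ∫ y in Ioi 0, g y :=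
        setIntegral_mono_set hgi
          ((ae_restrict_iff' measurableSet_Ioi).2 (ae_of_all _ fun y hy => hg0 y hy.le))
          (Ioc_subset_Ioi_self.trans (Ioi_subset_Ioi (by simpa using hlog 0))).eventuallyLE

theorem stmt7 (σ δ : ℝ) (hσ : 1 < σ) (hδ0 : 0 < δ) (hδ1 : δ < 1) :
    ∑' n : ℕ, Real.exp (-δ * Real.log ((n : ℝ) + 3) ^ σ) ≤
      (3 / δ) * Real.exp ((2 / (δ * σ)) ^ (1 / (σ - 1))) := by
  set C := (2 / (δ * σ)) ^ (1 / (σ - 1))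
  set g : ℝ → ℝ := fun y => exp (-(δ / 2) * y ^ σ)
  have hδ2 : 0 < δ / 2 := half_pos hδ0
  have hg : AntitoneOn g (Ici 0) := fun x hx y _ hxy =>
    exp_le_exp.2 (mul_le_mul_of_nonpos_left (rpow_le_rpow hx hxy (by linarith)) (by linarith))
  have hgi : IntegrableOn g (Ioi 0) := by
    simpa only [rpow_zero, one_mul] using
      integrableOn_rpow_mul_exp_neg_mul_rpow neg_one_lt_zero (zero_lt_one.trans hσ) hδ2
  have hgint : ∫ y in Ioi 0, g y ≤ 2 / δ :=
    calc ∫ y in Ioi 0, g y ≤ (δ / 2) ^ (-1 / σ) := integral_exp_neg_mul_rpow_le hσ.le hδ2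
      _ ≤ (δ / 2) ^ (-1 : ℝ) := rpow_le_rpow_of_exponent_ge hδ2 (by linarith)
          (by rw [le_div_iff₀ (by linarith)]; linarith)
      _ = 2 / δ := by rw [rpow_neg_one, inv_div]
  have hterm (n : ℕ) : exp (-δ * log ((n : ℝ) + 3) ^ σ) ≤ exp C * (g (log (n + 3)) / (n + 3)) := by
    have hn : (0 : ℝ) < n + 3 := by positivity
    set L := log ((n : ℝ) + 3)
    have hyoung := le_inv_rpow_add_mul_rpow hδ2 hσ (log_nonneg (by linarith) : 0 ≤ L)
    rw [show (δ / 2 * σ)⁻¹ = 2 / (δ * σ) by field_simp] at hyoung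
    calc exp (-δ * L ^ σ) ≤ exp (C + -(δ / 2) * L ^ σ - L) := exp_le_exp.2 (by linarith)
      _ = exp C * (g L / (n + 3)) := by rw [exp_sub, exp_add, exp_log hn, mul_div_assoc]
  refine tsum_le_of_sum_range_le (fun n => (exp_pos _).le) fun N => ?_
  calc ∑ n ∈ Finset.range N, exp (-δ * log ((n : ℝ) + 3) ^ σ)
      ≤ ∑ n ∈ Finset.range N, exp C * (g (log (n + 3)) / (n + 3)) :=
        Finset.sum_le_sum fun n _ => hterm n
    _ = exp C * ∑ n ∈ Finset.range N, g (log (n + 3)) / (n + 3) := (Finset.mul_sum ..).symm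
    _ ≤ exp C * (2 / δ) := by
        gcongr
        exact (hg.sum_div_le_integral_log (fun y _ => (exp_pos _).le) hgi N).trans hgint
    _ ≤ 3 / δ * exp C := by
        rw [mul_comm]
        gcongr
        norm_num
end
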